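/- The fixed point of the h-adic contraction solves the Maurer–Cartan equation when the obstructions vanish: suppose x ∈ g¹ with d₁x = 0, and τ : {1,2,...} → g¹ satisfies τ₁ = x and τ_b = −(1/2) h₂([τ,τ]_b) for all b ≥ 2, and suppose the obstructions vanish: π₂([τ,τ]_b) = 0 for all b ≥ 1. Then τ satisfies the Maurer–Cartan equation degreewise, i.e. d₁τ_b + (1/2)[τ,τ]_b = 0 for all b ≥ 1. -/

import Mathlib

/-- Extension of a sequence indexed by {1,2,3,...} to ℕ by zero. -/
def ext {V : Type*} [AddCommGroup V] (a : ℕ+ → V) : ℕ → V :=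
  fun n => if h : 0 < n then a ⟨n, h⟩ else 0

/-- The convolution [τ,τ´]_b = Σ_{i+j=b, i,j≥1} [τ_i, τ´_j] of two sequences
with respect to a bilinear bracket (terms with index 0 vanish). -/
def bconv {K V W : Type*} [Field K] [AddCommGroup V] [Module K V]
    [AddCommGroup W] [Module K W]
    (Q : V →ₗ[K] V →ₗ[K] W) (a b : ℕ+ → V) (n : ℕ+) : W :=
  ∑ i ∈ Finset.range ((n : ℕ) + 1), Q (ext a i) (ext b ((n : ℕ) - i))

/-!
Induction on the degree `n`. If the Maurer–Cartan equation holds below `n`, the Leibniz rule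
gives `d₂[τ,τ]ₙ = 2 Σ_{i+k=n} β(d₁τᵢ, τₖ) = -Σ_{i+j+k=n} β([τᵢ,τⱼ], τₖ)`. The triple sum is
invariant under cyclic rotation of `(i, j, k)`, so three times it is the sum of the Jacobi
expressions, i.e. zero. Hence `[τ,τ]ₙ` is a `d₂`-cocycle with vanishing harmonic part `π₂`, and
the homotopy identity gives `d₁h₂[τ,τ]ₙ = [τ,τ]ₙ`, which is the equation in degree `n` for
`τₙ = -½h₂[τ,τ]ₙ`.
-/

section Convolution

open Finset

variable {R U V V' W : Type*} [CommSemiring R]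
  [AddCommMonoid U] [Module R U] [AddCommMonoid V] [Module R V]
  [AddCommMonoid V'] [Module R V'] [AddCommMonoid W] [Module R W]

def conv (Q : V →ₗ[R] V' →ₗ[R] W) (a : ℕ → V) (b : ℕ → V') (n : ℕ) : W :=
  ∑ p ∈ antidiagonal n, Q (a p.1) (b p.2)

theorem conv_smul_left (Q : V →ₗ[R] V' →ₗ[R] W) (c : R) (a : ℕ → V) (b : ℕ → V') (n : ℕ) :
    conv Q (fun i => c • a i) b n = c • conv Q a b n := by
  simp only [conv, map_smul, LinearMap.smul_apply, smul_sum]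

theorem sum_antidiagonal_antidiagonal_rotate {M : Type*} [AddCommMonoid M]
    (f : ℕ → ℕ → ℕ → M) (n : ℕ) :
    ∑ p ∈ antidiagonal n, ∑ q ∈ antidiagonal p.1, f q.1 q.2 p.2 =
      ∑ p ∈ antidiagonal n, ∑ q ∈ antidiagonal p.1, f q.2 p.2 q.1 := by
  simp only [sum_sigma']
  refine sum_nbij' (fun x => ⟨(x.1.2 + x.2.1, x.2.2), (x.1.2, x.2.1)⟩)
    (fun x => ⟨(x.2.2 + x.1.2, x.2.1), (x.2.2, x.1.2)⟩) ?_ ?_ ?_ ?_ (fun _ _ => rfl) <;>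
  · rintro ⟨⟨i, k⟩, ⟨a, b⟩⟩
    simp only [mem_sigma, HasAntidiagonal.mem_antidiagonal, Sigma.mk.injEq, Prod.mk.injEq,
      heq_eq_eq, and_true]
    omega

theorem sum_antidiagonal_antidiagonal_cyclic {M : Type*} [AddCommMonoid M]
    (f : ℕ → ℕ → ℕ → M) (n : ℕ) :
    ∑ p ∈ antidiagonal n, ∑ q ∈ antidiagonal p.1,
        (f q.1 q.2 p.2 + f q.2 p.2 q.1 + f p.2 q.1 q.2) =
      3 • ∑ p ∈ antidiagonal n, ∑ q ∈ antidiagonal p.1, f q.1 q.2 p.2 := by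
  simp only [sum_add_distrib]
  rw [← sum_antidiagonal_antidiagonal_rotate,
    ← sum_antidiagonal_antidiagonal_rotate (fun i j k => f j k i),
    ← sum_antidiagonal_antidiagonal_rotate, succ_nsmul, two_nsmul]

theorem three_smul_conv_conv_eq_zero (br : V →ₗ[R] V →ₗ[R] W) (β : W →ₗ[R] V →ₗ[R] U)
    (hJacobi : ∀ x y z : V, β (br x y) z + β (br y z) x + β (br z x) y = 0)
    (a : ℕ → V) (n : ℕ) : 3 • conv β (conv br a a) a n = 0 := by
  have hexpand : conv β (conv br a a) a n =
      ∑ p ∈ antidiagonal n, ∑ q ∈ antidiagonal p.1, β (br (a q.1) (a q.2)) (a p.2) := by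
    simp only [conv, map_sum, LinearMap.sum_apply]
  rw [hexpand, ← sum_antidiagonal_antidiagonal_cyclic (fun i j k => β (br (a i) (a j)) (a k))]
  exact sum_eq_zero fun p _ => sum_eq_zero fun q _ => hJacobi _ _ _

theorem map_conv_of_leibniz (br : V →ₗ[R] V →ₗ[R] W) (β : W →ₗ[R] V →ₗ[R] U)
    (d1 : V →ₗ[R] W) (d2 : W →ₗ[R] U)
    (hLeibniz : ∀ x y : V, d2 (br x y) = β (d1 x) y + β (d1 y) x) (a : ℕ → V) (n : ℕ) :
    d2 (conv br a a n) = 2 • conv β (fun i => d1 (a i)) a n := by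
  rw [two_nsmul, conv, map_sum]
  simp only [hLeibniz, sum_add_distrib]
  congr 1
  exact Nat.sum_antidiagonal_swap (f := fun p => β (d1 (a p.1)) (a p.2))

end Convolution

theorem ext_coe {V : Type*} [AddCommGroup V] (a : ℕ+ → V) (n : ℕ+) : ext a n = a n :=
  dif_pos n.pos

theorem bconv_eq_conv_ext {K V W : Type*} [Field K] [AddCommGroup V] [Module K V]
    [AddCommGroup W] [Module K W] (Q : V →ₗ[K] V →ₗ[K] W) (a b : ℕ+ → V) (n : ℕ+) :
    bconv Q a b n = conv Q (ext a) (ext b) n :=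
  (Finset.Nat.sum_antidiagonal_eq_sum_range_succ (fun i j => Q (ext a i) (ext b j)) n).symm

theorem d_h_apply_eq_self_of_cocycle {R C1 C2 C3 H : Type*} [Semiring R]
    [AddCommGroup C1] [Module R C1] [AddCommGroup C2] [Module R C2]
    [AddCommGroup C3] [Module R C3] [AddCommGroup H] [Module R H]
    {d1 : C1 →ₗ[R] C2} {d2 : C2 →ₗ[R] C3} {h2 : C2 →ₗ[R] C1} {h3 : C3 →ₗ[R] C2}
    {π2 : C2 →ₗ[R] H} {n2 : H →ₗ[R] C2}
    (hSDR : d1.comp h2 + h3.comp d2 = LinearMap.id - n2.comp π2)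
    {y : C2} (hd : d2 y = 0) (hπ : π2 y = 0) : d1 (h2 y) = y := by
  simpa [hd, hπ] using LinearMap.congr_fun hSDR y

section MaurerCartan

variable {K g1 g2 g3 : Type*} [Field K] [CharZero K]
  [AddCommGroup g1] [Module K g1] [AddCommGroup g2] [Module K g2]
  [AddCommGroup g3] [Module K g3]
  {d1 : g1 →ₗ[K] g2} {d2 : g2 →ₗ[K] g3} {br : g1 →ₗ[K] g1 →ₗ[K] g2} {β : g2 →ₗ[K] g1 →ₗ[K] g3}

theorem map_conv_eq_zero_of_maurerCartan_lt
    (hLeibniz : ∀ x y : g1, d2 (br x y) = β (d1 x) y + β (d1 y) x)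
    (hJacobi : ∀ x y z : g1, β (br x y) z + β (br y z) x + β (br z x) y = 0)
    {T : ℕ → g1} (hT0 : T 0 = 0) {n : ℕ}
    (hMC : ∀ i < n, d1 (T i) + (2 : K)⁻¹ • conv br T T i = 0) :
    d2 (conv br T T n) = 0 := by
  have hsubst : conv β (fun i => d1 (T i)) T n
      = conv β (fun i => -(2 : K)⁻¹ • conv br T T i) T n := by
    refine Finset.sum_congr rfl fun p hp => ?_
    dsimp only
    rcases Nat.eq_zero_or_pos p.2 with h0 | hpos
    · simp only [h0, hT0, map_zero]
    · have hlt : p.1 < n := by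
        have := Finset.HasAntidiagonal.mem_antidiagonal.1 hp
        omega
      rw [eq_neg_of_add_eq_zero_left (hMC p.1 hlt), neg_smul]
  have hJ : conv β (conv br T T) T n = 0 := by
    have := three_smul_conv_conv_eq_zero br β hJacobi T n
    rwa [← Nat.cast_smul_eq_nsmul K, smul_eq_zero, or_iff_right (by norm_num)] at this
  rw [map_conv_of_leibniz br β d1 d2 hLeibniz, hsubst, conv_smul_left, hJ, smul_zero, smul_zero]

theorem maurerCartan_of_recursion {H2 : Type*} [AddCommGroup H2] [Module K H2]
    {h2 : g2 →ₗ[K] g1} {h3 : g3 →ₗ[K] g2} {π2 : g2 →ₗ[K] H2} {n2 : H2 →ₗ[K] g2}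
    (hSDR : d1.comp h2 + h3.comp d2 = LinearMap.id - n2.comp π2)
    (hLeibniz : ∀ x y : g1, d2 (br x y) = β (d1 x) y + β (d1 y) x)
    (hJacobi : ∀ x y z : g1, β (br x y) z + β (br y z) x + β (br z x) y = 0)
    {T : ℕ → g1} (hT0 : T 0 = 0) (hT1 : d1 (T 1) = 0)
    (hrec : ∀ n, 2 ≤ n → T n = -((2 : K)⁻¹ • h2 (conv br T T n)))
    (hobs : ∀ n, 2 ≤ n → π2 (conv br T T n) = 0) (n : ℕ) :
    d1 (T n) + (2 : K)⁻¹ • conv br T T n = 0 := by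
  induction n using Nat.strong_induction_on with
  | _ n IH =>
    match n with
    | 0 => simp [conv, hT0]
    | 1 => simp [conv, hT0, hT1, Finset.Nat.antidiagonal_succ]
    | n + 2 =>
      have hcocycle := map_conv_eq_zero_of_maurerCartan_lt hLeibniz hJacobi hT0 IH
      rw [hrec _ (by omega), map_neg, map_smul,
        d_h_apply_eq_self_of_cocycle hSDR hcocycle (hobs _ (by omega)), neg_add_cancel]

end MaurerCartan

theorem stmt14_general (K : Type*) [Field K] [CharZero K]
    (g1 g2 g3 H2 : Type*)
    [AddCommGroup g1] [Module K g1]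
    [AddCommGroup g2] [Module K g2] [AddCommGroup g3] [Module K g3]
    [AddCommGroup H2] [Module K H2]
    (d1 : g1 →ₗ[K] g2) (d2 : g2 →ₗ[K] g3)
    (h2 : g2 →ₗ[K] g1) (h3 : g3 →ₗ[K] g2)
    (π2 : g2 →ₗ[K] H2) (n2 : H2 →ₗ[K] g2)
    (hSDR2 : d1.comp h2 + h3.comp d2 = LinearMap.id - n2.comp π2)
    (br : g1 →ₗ[K] g1 →ₗ[K] g2)
    (β : g2 →ₗ[K] g1 →ₗ[K] g3)
    (hLeibniz : ∀ x y : g1, d2 (br x y) = β (d1 x) y + β (d1 y) x)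
    (hJacobi : ∀ x y z : g1, β (br x y) z + β (br y z) x + β (br z x) y = 0)
    (x : g1) (hx : d1 x = 0) (τ : ℕ+ → g1) (hτ1 : τ 1 = x)
    (hrec : ∀ b : ℕ+, 2 ≤ b → τ b = -((2 : K)⁻¹ • h2 (bconv br τ τ b)))
    (hobs : ∀ b : ℕ+, π2 (bconv br τ τ b) = 0) :
    ∀ b : ℕ+, d1 (τ b) + (2 : K)⁻¹ • bconv br τ τ b = 0 := by
  have hrec' : ∀ n, 2 ≤ n → ext τ n = -((2 : K)⁻¹ • h2 (conv br (ext τ) (ext τ) n)) := by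
    intro n hn
    lift n to ℕ+ using (by omega)
    rw [ext_coe, ← bconv_eq_conv_ext]
    exact hrec n (by exact_mod_cast hn)
  have hobs' : ∀ n, 2 ≤ n → π2 (conv br (ext τ) (ext τ) n) = 0 := by
    intro n hn
    lift n to ℕ+ using (by omega)
    rw [← bconv_eq_conv_ext]
    exact hobs n
  have hT1 : d1 (ext τ 1) = 0 := by
    rw [← PNat.one_coe, ext_coe, hτ1, hx]
  intro b
  rw [bconv_eq_conv_ext, ← ext_coe τ b]
  exact maurerCartan_of_recursion hSDR2 hLeibniz hJacobi rfl hT1 hrec' hobs' b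

/-- The fixed point of the h-adic contraction solves the
Maurer–Cartan equation when the obstructions vanish: if d₁x = 0, τ₁ = x,
τ_b = −(1/2)h₂([τ,τ]_b) for b ≥ 2, and π₂([τ,τ]_b) = 0 for all b ≥ 1, then
d₁τ_b + (1/2)[τ,τ]_b = 0 for all b ≥ 1. -/
theorem stmt14 (K : Type*) [Field K] [CharZero K]
    (g0 g1 g2 g3 H1 H2 : Type*)
    [AddCommGroup g0] [Module K g0] [AddCommGroup g1] [Module K g1]
    [AddCommGroup g2] [Module K g2] [AddCommGroup g3] [Module K g3]
    [AddCommGroup H1] [Module K H1] [AddCommGroup H2] [Module K H2]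
    (d0 : g0 →ₗ[K] g1) (d1 : g1 →ₗ[K] g2) (d2 : g2 →ₗ[K] g3)
    (h1 : g1 →ₗ[K] g0) (h2 : g2 →ₗ[K] g1) (h3 : g3 →ₗ[K] g2)
    (π1 : g1 →ₗ[K] H1) (n1 : H1 →ₗ[K] g1)
    (π2 : g2 →ₗ[K] H2) (n2 : H2 →ₗ[K] g2)
    (hdd1 : d1.comp d0 = 0) (hdd2 : d2.comp d1 = 0)
    (hSDR1 : d0.comp h1 + h2.comp d1 = LinearMap.id - n1.comp π1)
    (hSDR2 : d1.comp h2 + h3.comp d2 = LinearMap.id - n2.comp π2)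
    (hside1 : h1.comp h2 = 0) (hside2 : π1.comp h2 = 0)
    (hside3 : h1.comp n1 = 0) (hretr : π1.comp n1 = LinearMap.id)
    (hdn : d1.comp n1 = 0) (hπd : π2.comp d1 = 0)
    (br : g1 →ₗ[K] g1 →ₗ[K] g2) (hbrsymm : ∀ x y : g1, br x y = br y x)
    (β : g2 →ₗ[K] g1 →ₗ[K] g3)
    (hLeibniz : ∀ x y : g1, d2 (br x y) = β (d1 x) y + β (d1 y) x)
    (hJacobi : ∀ x y z : g1, β (br x y) z + β (br y z) x + β (br z x) y = 0)
    (x : g1) (hx : d1 x = 0) (τ : ℕ+ → g1) (hτ1 : τ 1 = x)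
    (hrec : ∀ b : ℕ+, 2 ≤ b → τ b = -((2 : K)⁻¹ • h2 (bconv br τ τ b)))
    (hobs : ∀ b : ℕ+, π2 (bconv br τ τ b) = 0) :
    ∀ b : ℕ+, d1 (τ b) + (2 : K)⁻¹ • bconv br τ τ b = 0 :=
  stmt14_general K g1 g2 g3 H2 d1 d2 h2 h3 π2 n2 hSDR2 br β hLeibniz hJacobi x hx τ hτ1 hrec hobs
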